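/- The extreme Kerr norm of the Killing vector satisfies the lower bound ρ² ≤ X₀ at every point of ℝ³ with r > 0. -/

import Mathlib

open Real MeasureTheory

noncomputable section

/-- Partial derivative with respect to ρ (the first coordinate) of an
axisymmetric function, viewed as a function of (ρ, z). -/
def pdR (f : ℝ × ℝ → ℝ) (p : ℝ × ℝ) : ℝ := fderiv ℝ f p (1, 0)

/-- Partial derivative with respect to z (the second coordinate). -/
def pdZ (f : ℝ × ℝ → ℝ) (p : ℝ × ℝ) : ℝ := fderiv ℝ f p (0, 1)

/-- |∂f|² = f_{,ρ}² + f_{,z}². -/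
def gradSq (f : ℝ × ℝ → ℝ) (p : ℝ × ℝ) : ℝ := (pdR f p) ^ 2 + (pdZ f p) ^ 2

/-- ∂f·∂g = f_{,ρ} g_{,ρ} + f_{,z} g_{,z}. -/
def gradDot (f g : ℝ × ℝ → ℝ) (p : ℝ × ℝ) : ℝ :=
  pdR f p * pdR g p + pdZ f p * pdZ g p

/-- The flat Laplacian of ℝ³ acting on axisymmetric functions:
Δf = f_{,ρρ} + ρ⁻¹ f_{,ρ} + f_{,zz}. -/
def lap (f : ℝ × ℝ → ℝ) (p : ℝ × ℝ) : ℝ :=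
  pdR (pdR f) p + (p.1)⁻¹ * pdR f p + pdZ (pdZ f) p

/-- The flat divergence of ℝ³ of an axisymmetric vector field (Wρ, Wz):
div W = ρ⁻¹ (ρ Wρ)_{,ρ} + Wz_{,z} = Wρ_{,ρ} + ρ⁻¹ Wρ + Wz_{,z}. -/
def divg (Wr Wz : ℝ × ℝ → ℝ) (p : ℝ × ℝ) : ℝ :=
  pdR Wr p + (p.1)⁻¹ * Wr p + pdZ Wz p

/-- The half-plane {ρ > 0} of (ρ, z), representing ℝ³ in cylindrical coordinates. -/
def HP : Set (ℝ × ℝ) := {p | 0 < p.1}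

/-- Ω_{ρ₀} = {ρ > ρ₀}, the exterior of the solid cylinder of radius ρ₀. -/
def Om (ρ₀ : ℝ) : Set (ℝ × ℝ) := {p | ρ₀ < p.1}

/-- ∫_{ℝ³} h dμ for an axisymmetric integrand h, where dμ = ρ dρ dz dφ. -/
def intR3 (h : ℝ × ℝ → ℝ) : ℝ := (2 * π) * ∫ p in HP, h p * p.1

/-- ∫_{Ω_{ρ₀}} h dμ for an axisymmetric integrand h. -/
def intOm (ρ₀ : ℝ) (h : ℝ × ℝ → ℝ) : ℝ := (2 * π) * ∫ p in Om ρ₀, h p * p.1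

/-- The mass functional M(v, Y) = (1/(32π)) ∫_{ℝ³} (|∂v|² + ρ⁻⁴ e^{−2v} |∂Y|²) dμ. -/
def MF (v Y : ℝ × ℝ → ℝ) : ℝ :=
  (1 / (32 * π)) *
    intR3 (fun p => gradSq v p + (p.1 ^ 4)⁻¹ * Real.exp (-2 * v p) * gradSq Y p)

/-- r = √(ρ² + z²). -/
def rr (p : ℝ × ℝ) : ℝ := Real.sqrt (p.1 ^ 2 + p.2 ^ 2)

/-- cos θ = z / r. -/
def cosT (p : ℝ × ℝ) : ℝ := p.2 / rr p

/-- sin²θ = ρ² / r². -/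
def sin2T (p : ℝ × ℝ) : ℝ := p.1 ^ 2 / (rr p) ^ 2

/-- r̃ = r + √|J|. -/
def rt (J : ℝ) (p : ℝ × ℝ) : ℝ := rr p + Real.sqrt |J|

/-- Σ = r̃² + |J| cos²θ. -/
def Sg (J : ℝ) (p : ℝ × ℝ) : ℝ := (rt J p) ^ 2 + |J| * (cosT p) ^ 2

/-- The extreme Kerr potential Y₀. -/
def Y0 (J : ℝ) (p : ℝ × ℝ) : ℝ :=
  2 * J * ((cosT p) ^ 3 - 3 * cosT p) - 2 * J ^ 2 * cosT p * (sin2T p) ^ 2 / Sg J p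

/-- The extreme Kerr Killing norm X₀. -/
def X0 (J : ℝ) (p : ℝ × ℝ) : ℝ :=
  (((rt J p) ^ 2 + |J|) ^ 2 - (rr p) ^ 2 * |J| * sin2T p) * sin2T p / Sg J p

/-- The extreme Kerr function v₀ = ln X₀ − 2 ln ρ, so that X₀ = ρ² e^{v₀}. -/
def v0 (J : ℝ) (p : ℝ × ℝ) : ℝ := Real.log (X0 J p) - 2 * Real.log p.1

/-- σ = √(r² + 1). -/
def sgm (p : ℝ × ℝ) : ℝ := Real.sqrt ((rr p) ^ 2 + 1)

/-- The pointwise weighted C¹ quantity σ^{−β}|f| + σ^{−β+1}|∂f|. -/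
def wFn (β : ℝ) (f : ℝ × ℝ → ℝ) (p : ℝ × ℝ) : ℝ :=
  sgm p ^ (-β) * |f p| + sgm p ^ (-β + 1) * Real.sqrt (gradSq f p)

/-- The weighted norm ‖f‖_{C¹_β(Ω)} = sup_Ω (σ^{−β}|f| + σ^{−β+1}|∂f|). -/
def C1norm (β : ℝ) (Ω : Set (ℝ × ℝ)) (f : ℝ × ℝ → ℝ) : ℝ :=
  sSup (wFn β f '' Ω)

/-- The Banach space 𝓑: pairs φ = (α, y) of axisymmetric C¹ functions with
y ≡ 0 on {ρ ≤ ρ₀} and finite norm ‖φ‖_𝓑 = ‖α‖_{C¹_β(ℝ³)} + ‖y‖_{C¹_β(Ω_{ρ₀})}. -/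
structure Bsp (ρ₀ β : ℝ) where
  a : ℝ × ℝ → ℝ
  y : ℝ × ℝ → ℝ
  ha : ContDiff ℝ 1 a
  hy : ContDiff ℝ 1 y
  hy0 : ∀ p : ℝ × ℝ, p.1 ≤ ρ₀ → y p = 0
  hba : BddAbove (wFn β a '' HP)
  hby : BddAbove (wFn β y '' Om ρ₀)

/-- The norm of 𝓑. -/
def Bnorm (ρ₀ β : ℝ) (φ : Bsp ρ₀ β) : ℝ :=
  C1norm β HP φ.a + C1norm β (Om ρ₀) φ.y

/-- i_φ(t) = M(u₀ + tφ) = M(v₀ + tα, Y₀ + ty). -/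
def iF (J ρ₀ β : ℝ) (φ : Bsp ρ₀ β) (t : ℝ) : ℝ :=
  MF (fun p => v0 J p + t * φ.a p) (fun p => Y0 J p + t * φ.y p)

/-- ‖α‖²_{H₁} = ∫_{ℝ³} |∂α|² dμ + ∫_{ℝ³} α² r⁻² dμ. -/
def H1sq (a : ℝ × ℝ → ℝ) : ℝ :=
  intR3 (fun p => gradSq a p) + intR3 (fun p => (a p) ^ 2 * ((rr p) ^ 2)⁻¹)

/-- ‖y‖²_{H₂} = ∫_{Ω_{ρ₀}} |∂y|² ρ⁻⁴ dμ + ∫_{Ω_{ρ₀}} y² ρ⁻⁶ dμ. -/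
def H2sq (ρ₀ : ℝ) (y : ℝ × ℝ → ℝ) : ℝ :=
  intOm ρ₀ (fun p => gradSq y p * (p.1 ^ 4)⁻¹) +
    intOm ρ₀ (fun p => (y p) ^ 2 * (p.1 ^ 6)⁻¹)

/-- ‖φ‖²_𝓗 = ‖α‖²_{H₁} + ‖y‖²_{H₂}. -/
def Hsq (ρ₀ β : ℝ) (φ : Bsp ρ₀ β) : ℝ := H1sq φ.a + H2sq ρ₀ φ.y

/-!
With `s = sin²θ`, `cos²θ = 1 - s`, `ρ² = s r²` and `A = r̃² + |J|`, the numerator of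
`X₀ - ρ²` over `Σ` collapses to `s · A · (A - r²)`, which is nonnegative because `r̃ ≥ r`.
-/

section ExtremeKerr

variable (J : ℝ) {p : ℝ × ℝ}

lemma rr_sq (p : ℝ × ℝ) : rr p ^ 2 = p.1 ^ 2 + p.2 ^ 2 :=
  Real.sq_sqrt (by positivity)

lemma sin2T_mul_rr_sq (hr : 0 < rr p) : sin2T p * rr p ^ 2 = p.1 ^ 2 := by
  unfold sin2T
  field_simp

lemma sin2T_add_cosT_sq (hr : 0 < rr p) : sin2T p + cosT p ^ 2 = 1 := by
  unfold sin2T cosT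
  field_simp
  rw [rr_sq]

lemma rr_le_rt (p : ℝ × ℝ) : rr p ≤ rt J p :=
  le_add_of_nonneg_right (Real.sqrt_nonneg _)

lemma Sg_pos (hr : 0 < rr p) : 0 < Sg J p := by
  have : 0 < rt J p := hr.trans_le (rr_le_rt J p)
  unfold Sg
  positivity

lemma sin2T_nonneg (p : ℝ × ℝ) : 0 ≤ sin2T p := by
  unfold sin2T
  positivity

lemma X0_sub_sq (hr : 0 < rr p) :
    X0 J p - p.1 ^ 2 =
      sin2T p * (rt J p ^ 2 + |J|) * (rt J p ^ 2 + |J| - rr p ^ 2) / Sg J p := by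
  rw [X0, eq_div_iff (Sg_pos J hr).ne', sub_mul, div_mul_cancel₀ _ (Sg_pos J hr).ne', Sg,
    ← sin2T_mul_rr_sq hr]
  linear_combination (-(rr p ^ 2 * |J| * sin2T p)) * sin2T_add_cosT_sq hr

end ExtremeKerr

theorem extremeKerr_X0_lower_bound_general (J : ℝ) :
    ∀ p : ℝ × ℝ, 0 ≤ p.1 → 0 < rr p → p.1 ^ 2 ≤ X0 J p := by
  intro p _ hr
  have hA : rr p ^ 2 ≤ rt J p ^ 2 + |J| :=
    (pow_le_pow_left₀ hr.le (rr_le_rt J p) 2).trans (le_add_of_nonneg_right (abs_nonneg J))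
  rw [← sub_nonneg, X0_sub_sq J hr]
  exact div_nonneg
    (mul_nonneg (mul_nonneg (sin2T_nonneg p) (by positivity)) (sub_nonneg.2 hA))
    (Sg_pos J hr).le

/-- The extreme Kerr norm of the Killing vector satisfies the lower
bound ρ² ≤ X₀ at every point of ℝ³ with r > 0. -/
theorem extremeKerr_X0_lower_bound (J : ℝ) (hJ : J ≠ 0) :
    ∀ p : ℝ × ℝ, 0 ≤ p.1 → 0 < rr p → p.1 ^ 2 ≤ X0 J p :=
  extremeKerr_X0_lower_bound_general J
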